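/- arXiv:2308.03339 — 8 statements merged into one kernel-verified Lean document; each statement's English description precedes it below -/
import Mathlib

section
/- Let X be a separable real Banach space and Y a real Banach space. Let U : X → Y be a bijection with the property that for every x₀ ∈ X there exists ε > 0 such that the restriction of U to the closed ball B(x₀, ε) is an isometry. Then U is a surjective isometry from X onto Y (this answers Scottish Book Problem 155 affirmatively in the separable case). -/
/-!
Being locally 1-Lipschitz on the convex space `X`, `U` is 1-Lipschitz. For the reverse
inequality, pull the segment `σ` from `U x₁` to `U x₂` back through `U⁻¹`. The path
`f = U⁻¹ ∘ σ` has closed graph because `U` is continuous, and it is `‖U x₁ - U x₂‖`-Lipschitz on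
the preimage of every ball on which `U` is isometric. Let `B` be the closed set of parameters near
which `f` is not Lipschitz. Countably many isometry balls cover the separable space `X`, so by
Baire's theorem in `B` one of their preimages contains all points of `B` near some `t₀ ∈ B`.
On the gaps of `B`, `f` is locally Lipschitz, hence Lipschitz up to the endpoints of the gap
(closed graph and completeness of `X`); gluing these pieces with the part of `B` near `t₀`
makes `f` Lipschitz near `t₀`, a contradiction.
-/

open Set Filter Topology Metric NNReal

theorem Set.OrdConnected.lipschitzOnWith_of_forall_nhds {E : Type*} [PseudoMetricSpace E]
    {f : ℝ → E} {K : ℝ≥0} {s : Set ℝ} (hs : s.OrdConnected)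
    (hf : ∀ t ∈ s, ∃ n ∈ 𝓝 t, LipschitzOnWith K f n) : LipschitzOnWith K f s := by
  refine LipschitzOnWith.of_dist_le_mul fun b hb a ha => ?_
  wlog hab : a ≤ b generalizing a b
  · rw [dist_comm, dist_comm b]
    exact this a ha b hb (le_of_not_ge hab)
  have hcont : ContinuousOn f (Icc a b) := fun t ht => by
    obtain ⟨n, hn, hfn⟩ := hf t (hs.out ha hb ht)
    exact (hfn.continuousOn.continuousAt hn).continuousWithinAt
  have hstep : Icc a b ⊆ {t | dist (f t) (f a) ≤ K * (t - a)} := by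
    refine IsClosed.Icc_subset_of_forall_mem_nhdsWithin ?_ (by simp) ?_
    · rw [inter_comm]
      exact isClosed_Icc.isClosed_le
        (continuous_dist.comp_continuousOn (hcont.prodMk continuousOn_const))
        (continuous_const.mul (continuous_id.sub continuous_const)).continuousOn
    · rintro x ⟨hxa, hx⟩
      obtain ⟨n, hn, hfn⟩ := hf x (hs.out ha hb (Ico_subset_Icc_self hx))
      filter_upwards [nhdsWithin_le_nhds hn, self_mem_nhdsWithin] with z hz (hxz : x < z)
      calc dist (f z) (f a) ≤ dist (f z) (f x) + dist (f x) (f a) := dist_triangle _ _ _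
        _ ≤ K * (z - x) + K * (x - a) := by
          gcongr
          · simpa [Real.dist_eq, abs_of_pos (sub_pos.2 hxz)]
              using hfn.dist_le_mul z hz x (mem_of_mem_nhds hn)
          · exact hxa
        _ = K * (z - a) := by ring
  simpa [Real.dist_eq, abs_of_nonneg (sub_nonneg.2 hab)] using hstep (right_mem_Icc.2 hab)

theorem lipschitzWith_of_forall_nhds {E F : Type*} [NormedAddCommGroup E] [NormedSpace ℝ E]
    [PseudoMetricSpace F] {g : E → F} {K : ℝ≥0}
    (hg : ∀ x, ∃ n ∈ 𝓝 x, LipschitzOnWith K g n) : LipschitzWith K g := by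
  refine LipschitzWith.of_dist_le_mul fun x y => ?_
  have hline : LipschitzOnWith (K * nndist x y) (g ∘ AffineMap.lineMap (k := ℝ) x y) univ := by
    refine ordConnected_univ.lipschitzOnWith_of_forall_nhds fun t _ => ?_
    obtain ⟨n, hn, hgn⟩ := hg (AffineMap.lineMap x y t)
    exact ⟨_, (AffineMap.lineMap_continuous.continuousAt).preimage_mem_nhds hn,
      hgn.comp (lipschitzWith_lineMap x y).lipschitzOnWith (mapsTo_preimage _ _)⟩
  simpa using hline.dist_le_mul 0 (mem_univ _) 1 (mem_univ _)

theorem UniformContinuousOn.tendsto_nhdsWithin_of_isClosed_graph {α X : Type*} [UniformSpace α]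
    [UniformSpace X] [CompleteSpace X] {f : α → X} {s : Set α} {c : α}
    (hgraph : IsClosed (Function.graph f)) (hf : UniformContinuousOn f s)
    (hc : c ∈ closure s) : Tendsto f (𝓝[s] c) (𝓝 (f c)) := by
  have := mem_closure_iff_nhdsWithin_neBot.1 hc
  have hcauchy : Cauchy (map f (𝓝[s] c)) := by
    refine ⟨inferInstance, ?_⟩
    rw [prod_map_map_eq]
    refine hf.mono_left (le_inf ?_ ?_)
    · exact (cauchy_nhds.mono nhdsWithin_le_nhds).2
    · exact le_principal_iff.2 (prod_mem_prod self_mem_nhdsWithin self_mem_nhdsWithin)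
  obtain ⟨x, hx⟩ := CompleteSpace.complete hcauchy
  have hgraph_mem : (c, x) ∈ Function.graph f :=
    hgraph.mem_of_tendsto ((tendsto_nhdsWithin_iff.1 tendsto_id).1.prodMk_nhds hx)
      (Eventually.of_forall fun _ => rfl)
  rwa [← hgraph_mem] at hx

theorem UniformContinuousOn.isClosed_preimage_of_isClosed_graph {α X : Type*} [UniformSpace α]
    [UniformSpace X] [CompleteSpace X] {f : α → X} {F : Set X}
    (hgraph : IsClosed (Function.graph f)) (hF : IsClosed F)
    (hf : UniformContinuousOn f (f ⁻¹' F)) :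
    IsClosed (f ⁻¹' F) := by
  refine isClosed_of_closure_subset fun c hc => ?_
  have := mem_closure_iff_nhdsWithin_neBot.1 hc
  exact hF.mem_of_tendsto (hf.tendsto_nhdsWithin_of_isClosed_graph hgraph hc)
    eventually_mem_nhdsWithin

theorem LipschitzOnWith.closure_of_isClosed_graph {α X : Type*} [PseudoMetricSpace α]
    [PseudoMetricSpace X] [CompleteSpace X] {f : α → X} {K : ℝ≥0} {s : Set α}
    (hgraph : IsClosed (Function.graph f)) (hf : LipschitzOnWith K f s) :
    LipschitzOnWith K f (closure s) := by
  refine LipschitzOnWith.of_dist_le_mul fun a ha b hb => ?_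
  have := mem_closure_iff_nhdsWithin_neBot.1 ha
  have := mem_closure_iff_nhdsWithin_neBot.1 hb
  have hfa := hf.uniformContinuousOn.tendsto_nhdsWithin_of_isClosed_graph hgraph ha
  have hfb := hf.uniformContinuousOn.tendsto_nhdsWithin_of_isClosed_graph hgraph hb
  have hfst : Tendsto Prod.fst (𝓝[s] a ×ˢ 𝓝[s] b) (𝓝 a) :=
    tendsto_fst.mono_right nhdsWithin_le_nhds
  have hsnd : Tendsto Prod.snd (𝓝[s] a ×ˢ 𝓝[s] b) (𝓝 b) :=
    tendsto_snd.mono_right nhdsWithin_le_nhds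
  refine le_of_tendsto_of_tendsto ((hfa.comp tendsto_fst).dist (hfb.comp tendsto_snd))
    ((hfst.dist hsnd).const_mul (K : ℝ)) ?_
  filter_upwards [prod_mem_prod self_mem_nhdsWithin self_mem_nhdsWithin] with p hp
  exact hf.dist_le_mul p.1 hp.1 p.2 hp.2

section RealClosedGraph

variable {X : Type*} [PseudoMetricSpace X] [CompleteSpace X] {f : ℝ → X} {K : ℝ≥0}

theorem dist_le_mul_of_forall_mem_Ioo (hgraph : IsClosed (Function.graph f)) {a b : ℝ}
    (hab : a ≤ b) (hf : ∀ t ∈ Ioo a b, ∃ n ∈ 𝓝 t, LipschitzOnWith K f n) :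
    dist (f a) (f b) ≤ K * (b - a) := by
  rcases hab.eq_or_lt with rfl | hlt
  · simp
  have hIcc :=
    (ordConnected_Ioo.lipschitzOnWith_of_forall_nhds hf).closure_of_isClosed_graph hgraph
  rw [closure_Ioo hlt.ne] at hIcc
  have ha : a ∈ Icc a b := left_mem_Icc.2 hab
  have hb : b ∈ Icc a b := right_mem_Icc.2 hab
  exact (hIcc.dist_le_mul a ha b hb).trans (by gcongr; exact Real.dist_le_of_mem_Icc ha hb)

theorem Set.OrdConnected.lipschitzOnWith_of_isClosed_graph {s C : Set ℝ} (hs : s.OrdConnected)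
    (hgraph : IsClosed (Function.graph f)) (hC : IsClosed C) (hfC : LipschitzOnWith K f (C ∩ s))
    (hf : ∀ t ∈ s \ C, ∃ n ∈ 𝓝 t, LipschitzOnWith K f n) : LipschitzOnWith K f s := by
  refine LipschitzOnWith.of_dist_le_mul fun a ha b hb => ?_
  wlog hab : a ≤ b generalizing a b
  · rw [dist_comm, dist_comm a]
    exact this b hb a ha (le_of_not_ge hab)
  have hIcc : Icc a b ⊆ s := hs.out ha hb
  suffices h : dist (f a) (f b) ≤ K * (b - a) from
    h.trans (by gcongr; rw [dist_comm]; exact Real.sub_le_dist b a)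
  by_cases hCab : (C ∩ Icc a b).Nonempty
  swap
  · refine dist_le_mul_of_forall_mem_Ioo hgraph hab fun t ht =>
      hf t ⟨hIcc (Ioo_subset_Icc_self ht), fun htC => hCab ⟨t, htC, Ioo_subset_Icc_self ht⟩⟩
  have hbdd_below : BddBelow (C ∩ Icc a b) := ⟨a, fun _ h => h.2.1⟩
  have hbdd_above : BddAbove (C ∩ Icc a b) := ⟨b, fun _ h => h.2.2⟩
  set c := sInf (C ∩ Icc a b)
  set c' := sSup (C ∩ Icc a b)
  have hc : c ∈ C ∩ Icc a b := (hC.inter isClosed_Icc).csInf_mem hCab hbdd_below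
  have hc' : c' ∈ C ∩ Icc a b := (hC.inter isClosed_Icc).csSup_mem hCab hbdd_above
  have hcc' : c ≤ c' := csInf_le_csSup hCab hbdd_below hbdd_above
  have hac : dist (f a) (f c) ≤ K * (c - a) := by
    refine dist_le_mul_of_forall_mem_Ioo hgraph hc.2.1 fun t ht => hf t ⟨hIcc ⟨ht.1.le, ?_⟩, ?_⟩
    · exact ht.2.le.trans hc.2.2
    · exact fun htC => (csInf_le hbdd_below ⟨htC, ht.1.le, ht.2.le.trans hc.2.2⟩).not_gt ht.2
  have hcb : dist (f c') (f b) ≤ K * (b - c') := by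
    refine dist_le_mul_of_forall_mem_Ioo hgraph hc'.2.2 fun t ht => hf t ⟨hIcc ⟨?_, ht.2.le⟩, ?_⟩
    · exact hc'.2.1.trans ht.1.le
    · exact fun htC => (le_csSup hbdd_above ⟨htC, hc'.2.1.trans ht.1.le, ht.2.le⟩).not_gt ht.1
  have hcc : dist (f c) (f c') ≤ K * (c' - c) :=
    (hfC.dist_le_mul c ⟨hc.1, hIcc hc.2⟩ c' ⟨hc'.1, hIcc hc'.2⟩).trans
      (by gcongr; exact Real.dist_le_of_mem_Icc (left_mem_Icc.2 hcc') (right_mem_Icc.2 hcc'))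
  calc dist (f a) (f b) ≤ dist (f a) (f c) + dist (f c) (f c') + dist (f c') (f b) :=
        dist_triangle4 _ _ _ _
    _ ≤ K * (c - a) + K * (c' - c) + K * (b - c') := by gcongr
    _ = K * (b - a) := by ring

theorem lipschitzWith_of_isClosed_graph [TopologicalSpace.SeparableSpace X]
    (hgraph : IsClosed (Function.graph f))
    (hball : ∀ x, ∃ r > 0, LipschitzOnWith K f (f ⁻¹' closedBall x r)) : LipschitzWith K f := by
  choose r hr hfr using hball
  set G := {t : ℝ | ∃ n ∈ 𝓝 t, LipschitzOnWith K f n}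
  have hG : IsOpen G := isOpen_iff_mem_nhds.2 fun t ⟨n, hn, hfn⟩ =>
    mem_of_superset (interior_mem_nhds.2 hn) fun z hz =>
      ⟨interior n, isOpen_interior.mem_nhds hz, hfn.mono interior_subset⟩
  suffices hGuniv : G = univ by
    rw [← lipschitzOnWith_univ]
    exact ordConnected_univ.lipschitzOnWith_of_forall_nhds fun t _ =>
      (hGuniv.symm ▸ mem_univ t : t ∈ G)
  by_contra hGne
  set B := Gᶜ
  have hB : IsClosed B := hG.isClosed_compl
  have : Nonempty B := (nonempty_compl.2 hGne).to_subtype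
  have : CompleteSpace B := hB.completeSpace_coe
  obtain ⟨S, hS, hScover⟩ :=
    TopologicalSpace.countable_cover_nhds fun x : X => closedBall_mem_nhds x (hr x)
  have : Countable S := hS.to_subtype
  obtain ⟨⟨x, _⟩, t₀, ht₀⟩ := nonempty_interior_of_iUnion_of_closed
    (f := fun x : S => ((↑) : B → ℝ) ⁻¹' (f ⁻¹' closedBall x (r x)))
    (fun x => ((hfr x).uniformContinuousOn.isClosed_preimage_of_isClosed_graph hgraph
      isClosed_closedBall).preimage continuous_subtype_val)
    (iUnion_eq_univ_iff.2 fun t => by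
      obtain ⟨x, hxS, hx⟩ := mem_iUnion₂.1 (hScover.symm ▸ mem_univ (f t))
      exact ⟨⟨x, hxS⟩, hx⟩)
  obtain ⟨u, hu, hus⟩ := (mem_nhds_subtype _ _ _).1 (mem_interior_iff_mem_nhds.1 ht₀)
  obtain ⟨ε, hε, hεu⟩ := Metric.mem_nhds_iff.1 hu
  refine t₀.2 ⟨ball t₀ ε, ball_mem_nhds _ hε, ?_⟩
  refine (Real.ball_eq_Ioo t₀ ε ▸ ordConnected_Ioo).lipschitzOnWith_of_isClosed_graph hgraph hB ?_
    fun t ht => ?_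
  · exact (hfr x).mono fun t ht => @hus ⟨t, ht.1⟩ (hεu ht.2)
  · simpa [B, G] using ht.2

end RealClosedGraph

def LocallyIsometric {X Y : Type*} [PseudoMetricSpace X] [PseudoMetricSpace Y] (U : X → Y) :
    Prop :=
  ∀ x, ∃ r > 0, ∀ x₁ ∈ closedBall x r, ∀ x₂ ∈ closedBall x r, dist (U x₁) (U x₂) = dist x₁ x₂

namespace LocallyIsometric

theorem lipschitzWith_one {X Y : Type*} [NormedAddCommGroup X] [NormedSpace ℝ X]
    [PseudoMetricSpace Y] {U : X → Y} (hU : LocallyIsometric U) : LipschitzWith 1 U :=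
  lipschitzWith_of_forall_nhds fun x =>
    let ⟨r, hr, hUr⟩ := hU x
    ⟨closedBall x r, closedBall_mem_nhds x hr,
      LipschitzOnWith.of_dist_le_mul fun a ha b hb => by simp [hUr a ha b hb]⟩

theorem dist_le_dist {X Y : Type*} [MetricSpace X] [CompleteSpace X]
    [TopologicalSpace.SeparableSpace X] [NormedAddCommGroup Y] [NormedSpace ℝ Y] {U : X → Y}
    (hU : LocallyIsometric U) (hbij : Function.Bijective U) (hcont : Continuous U) (x₁ x₂ : X) :
    dist x₁ x₂ ≤ dist (U x₁) (U x₂) := by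
  obtain ⟨V, hVU, hUV⟩ := Function.bijective_iff_has_inverse.1 hbij
  have hVU : ∀ x, V (U x) = x := hVU
  have hUV : ∀ y, U (V y) = y := hUV
  set σ := AffineMap.lineMap (k := ℝ) (U x₁) (U x₂)
  have hgraph : IsClosed (Function.graph (V ∘ σ)) := by
    have : Function.graph (V ∘ σ) = {p : ℝ × X | σ p.1 = U p.2} := by
      ext ⟨t, x⟩
      exact ⟨fun h => h ▸ (hUV _).symm, fun h => (congrArg V h).trans (hVU x)⟩
    rw [this]
    exact isClosed_eq (AffineMap.lineMap_continuous.comp continuous_fst) (hcont.comp continuous_snd)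
  have hball : ∀ x, ∃ r > 0, LipschitzOnWith (nndist (U x₁) (U x₂)) (V ∘ σ)
      ((V ∘ σ) ⁻¹' closedBall x r) := fun x => by
    obtain ⟨r, hr, hUr⟩ := hU x
    refine ⟨r, hr, LipschitzOnWith.of_dist_le_mul fun s hs t ht => ?_⟩
    rw [← hUr _ hs _ ht, Function.comp_apply, Function.comp_apply, hUV, hUV]
    exact (lipschitzWith_lineMap (U x₁) (U x₂)).dist_le_mul s t
  simpa [σ, hVU] using (lipschitzWith_of_isClosed_graph hgraph hball).dist_le_mul 0 1

end LocallyIsometric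

theorem scottish_book_155_general
    {X Y : Type*} [NormedAddCommGroup X] [NormedSpace ℝ X] [CompleteSpace X]
    [TopologicalSpace.SeparableSpace X]
    [NormedAddCommGroup Y] [NormedSpace ℝ Y]
    (U : X → Y) (hU : Function.Bijective U)
    (hloc : ∀ x₀ : X, ∃ ε > 0, ∀ x₁ ∈ Metric.closedBall x₀ ε, ∀ x₂ ∈ Metric.closedBall x₀ ε,
      ‖U x₁ - U x₂‖ = ‖x₁ - x₂‖) :
    Function.Surjective U ∧ ∀ x₁ x₂ : X, ‖U x₁ - U x₂‖ = ‖x₁ - x₂‖ := by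
  have hiso : LocallyIsometric U := fun x => by
    obtain ⟨r, hr, hUr⟩ := hloc x
    exact ⟨r, hr, fun a ha b hb => by simpa [dist_eq_norm] using hUr a ha b hb⟩
  have hlip := hiso.lipschitzWith_one
  refine ⟨hU.2, fun x₁ x₂ => ?_⟩
  rw [← dist_eq_norm, ← dist_eq_norm]
  exact le_antisymm (by simpa using hlip.dist_le_mul x₁ x₂)
    (hiso.dist_le_dist hU hlip.continuous x₁ x₂)

/-- Scottish Book Problem 155, separable case: a locally isometric bijection
between real Banach spaces, with `X` separable, is a surjective isometry. -/
theorem scottish_book_155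
    {X Y : Type*} [NormedAddCommGroup X] [NormedSpace ℝ X] [CompleteSpace X]
    [TopologicalSpace.SeparableSpace X]
    [NormedAddCommGroup Y] [NormedSpace ℝ Y] [CompleteSpace Y]
    (U : X → Y) (hU : Function.Bijective U)
    (hloc : ∀ x₀ : X, ∃ ε > 0, ∀ x₁ ∈ Metric.closedBall x₀ ε, ∀ x₂ ∈ Metric.closedBall x₀ ε,
      ‖U x₁ - U x₂‖ = ‖x₁ - x₂‖) :
    Function.Surjective U ∧ ∀ x₁ x₂ : X, ‖U x₁ - U x₂‖ = ‖x₁ - x₂‖ :=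
  scottish_book_155_general U hU hloc
end

section
/- Let X be a real Banach space, x₀ ∈ X and r > 0. Let D ⊂ X be a subset with B(x₀, r) ⊂ D, and let g : D → X be an isometry satisfying g(x) = x for every x ∈ B(x₀, r). Then g(x) = x holds for every x ∈ D ∩ B(x₀, 2r). -/
/-! An isometry fixing `B(x₀, r)` moves each `x ∈ D` to a point `y` with `d(y, p) = d(x, p)` for all
`p ∈ B(x₀, r)`. Put `u = y - x` and let `m` be the midpoint of `x₀` and `x`, which lies in `B(x₀, r)`
when `d(x, x₀) ≤ 2r`. Reflection in `m` swaps `x₀` and `x`, so testing the equidistance at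
`p = m + k u` gives `d(m + (1 - k) u, x₀) = d(m - k u, x₀)` whenever `d(m + k u, x₀) ≤ r`. Starting
from `k = 0`, this propagates `d(m + k u, x₀) = d(m, x₀)` to every `k ∈ ℤ`, so the multiples of `u`
are bounded and `u = 0`. -/

open Metric

theorem Int.apply_eq_apply_zero_of_apply_one_sub_eq {α : Type*} {f : ℤ → α} {s : Set α}
    (h₀ : f 0 ∈ s) (hf : ∀ k, f k ∈ s → f (1 - k) = f (-k)) (k : ℤ) : f k = f 0 := by
  have hnat : ∀ n : ℕ, f n = f 0 ∧ f (-n) = f 0 := by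
    intro n
    induction n with
    | zero => simp
    | succ n ih =>
      have hsucc : f (n + 1) = f 0 := by
        have hstep := hf (-n) (ih.2 ▸ h₀)
        rw [sub_neg_eq_add, neg_neg, add_comm] at hstep
        rw [hstep, ih.1]
      refine ⟨mod_cast hsucc, ?_⟩
      have hstep := hf (n + 1) (hsucc ▸ h₀)
      rw [show (1 : ℤ) - (n + 1) = -n by ring] at hstep
      rw [Nat.cast_succ, ← hstep, ih.2]
  obtain ⟨n, rfl | rfl⟩ := Int.eq_nat_or_neg k
  exacts [(hnat n).1, (hnat n).2]

theorem eq_zero_of_forall_norm_nsmul_le {E : Type*} [NormedAddCommGroup E] [NormedSpace ℝ E]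
    {u : E} (C : ℝ) (h : ∀ n : ℕ, ‖n • u‖ ≤ C) : u = 0 := by
  by_contra hu
  obtain ⟨n, hn⟩ := exists_nat_gt (C / ‖u‖)
  have hnu := h n
  rw [RCLike.norm_nsmul ℝ, nsmul_eq_mul] at hnu
  rw [div_lt_iff₀ (norm_pos_iff.2 hu)] at hn
  linarith

theorem eq_of_dist_eq_on_closedBall {E : Type*} [NormedAddCommGroup E] [NormedSpace ℝ E]
    {x₀ x y : E} {r : ℝ} (hx : dist x x₀ ≤ 2 * r)
    (h : ∀ p ∈ closedBall x₀ r, dist y p = dist x p) : y = x := by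
  set m := midpoint ℝ x₀ x
  obtain ⟨u, rfl⟩ : ∃ u, y = x + u := ⟨y - x, by abel⟩
  have hm : dist m x₀ ≤ r := by
    rw [dist_midpoint_left, dist_comm, Real.norm_two]
    linarith
  have hxm : x - m = m - x₀ := by
    rw [right_sub_midpoint, midpoint_sub_left]
  clear_value m
  have hreflect : ∀ k : ℤ, dist (m + k • u) x₀ ≤ r →
      dist (m + (1 - k) • u) x₀ = dist (m + (-k) • u) x₀ := by
    intro k hk
    have hyx := h (m + k • u) (mem_closedBall.2 hk)
    rw [dist_eq_norm, dist_eq_norm] at hyx ⊢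
    convert hyx using 2 <;> linear_combination (norm := module) hxm.symm
  have hconst := Int.apply_eq_apply_zero_of_apply_one_sub_eq (f := fun k : ℤ ↦ dist (m + k • u) x₀)
    (s := Set.Iic r) (by simpa using hm) hreflect
  suffices u = 0 by rw [this, add_zero]
  refine eq_zero_of_forall_norm_nsmul_le (2 * dist m x₀) fun n ↦ ?_
  calc ‖n • u‖ = dist (m + (n : ℤ) • u) m := by simp [dist_eq_norm]
    _ ≤ dist (m + (n : ℤ) • u) x₀ + dist m x₀ := dist_triangle_right _ _ _
    _ = 2 * dist m x₀ := by rw [hconst, zero_smul, add_zero, two_mul]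

theorem isometry_fix_ball_extends_to_double_ball_general
    {X : Type*} [NormedAddCommGroup X] [NormedSpace ℝ X]
    (x₀ : X) (r : ℝ) (D : Set X) (hD : Metric.closedBall x₀ r ⊆ D)
    (g : X → X)
    (hg : ∀ x₁ ∈ D, ∀ x₂ ∈ D, ‖g x₁ - g x₂‖ = ‖x₁ - x₂‖)
    (hfix : ∀ x ∈ Metric.closedBall x₀ r, g x = x) :
    ∀ x ∈ D ∩ Metric.closedBall x₀ (2 * r), g x = x := by
  rintro x ⟨hxD, hx⟩
  refine eq_of_dist_eq_on_closedBall hx fun p hp ↦ ?_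
  rw [dist_eq_norm, dist_eq_norm, ← hg x hxD p (hD hp), hfix p hp]

/-- Lemma 1: an isometry on a set `D` containing the ball `B(x₀, r)` which fixes
that ball pointwise also fixes `D ∩ B(x₀, 2r)` pointwise. -/
theorem isometry_fix_ball_extends_to_double_ball
    {X : Type*} [NormedAddCommGroup X] [NormedSpace ℝ X] [CompleteSpace X]
    (x₀ : X) (r : ℝ) (hr : 0 < r) (D : Set X) (hD : Metric.closedBall x₀ r ⊆ D)
    (g : X → X)
    (hg : ∀ x₁ ∈ D, ∀ x₂ ∈ D, ‖g x₁ - g x₂‖ = ‖x₁ - x₂‖)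
    (hfix : ∀ x ∈ Metric.closedBall x₀ r, g x = x) :
    ∀ x ∈ D ∩ Metric.closedBall x₀ (2 * r), g x = x :=
  isometry_fix_ball_extends_to_double_ball_general x₀ r D hD g hg hfix
end

section
/- Let X be a real Banach space and x₀, x₁ ∈ X, and set x₂ = (x₀ + x₁)/2. Define C₁ = B(x₀, ‖x₁ − x₀‖/2) ∩ B(x₁, ‖x₁ − x₀‖/2), and inductively C_{n+1} = {x ∈ C_n : C_n ⊂ B(x, δ(C_n)/2)} for n ≥ 1, where δ denotes diameter. Then for every n ≥ 1: (i) x₂ ∈ C_n, and (ii) a point x lies in C_n if and only if 2x₂ − x lies in C_n. -/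
/-- Every set `C_n` of the Mazur--Ulam sequence contains the midpoint
`x₂ = (x₀ + x₁)/2` and is symmetric about it. -/
theorem mazurUlam_sets_midpoint_mem_and_symm
    {X : Type*} [NormedAddCommGroup X] [NormedSpace ℝ X] [CompleteSpace X]
    (x₀ x₁ : X) (x₂ : X) (hx₂ : x₂ = (2⁻¹ : ℝ) • (x₀ + x₁)) (C : ℕ → Set X)
    (hC1 : C 1 = Metric.closedBall x₀ (‖x₁ - x₀‖ / 2) ∩ Metric.closedBall x₁ (‖x₁ - x₀‖ / 2))
    (hCsucc : ∀ n ≥ 1, C (n + 1) =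
      {x ∈ C n | C n ⊆ Metric.closedBall x (Metric.diam (C n) / 2)}) :
    ∀ n ≥ 1, x₂ ∈ C n ∧ ∀ x : X, x ∈ C n ↔ (2 : ℝ) • x₂ - x ∈ C n := by
  have h2x₂ : (2 : ℝ) • x₂ = x₀ + x₁ := by
    rw [hx₂, smul_smul]; norm_num
  have key : ∀ n ≥ 1, (x₂ ∈ C n ∧ ∀ x : X, x ∈ C n ↔ (2 : ℝ) • x₂ - x ∈ C n) ∧ C n ⊆ C 1 := by
    intro n hn
    induction n, hn using Nat.le_induction with
    | base =>
      refine ⟨⟨?_, ?_⟩, subset_rfl⟩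
      · rw [hC1]
        constructor
        · rw [Metric.mem_closedBall, dist_eq_norm, hx₂]
          have : (2⁻¹ : ℝ) • (x₀ + x₁) - x₀ = (2⁻¹ : ℝ) • (x₁ - x₀) := by
            module
          rw [this, norm_smul]
          simp [div_eq_inv_mul]
        · rw [Metric.mem_closedBall, dist_eq_norm, hx₂]
          have : (2⁻¹ : ℝ) • (x₀ + x₁) - x₁ = (2⁻¹ : ℝ) • (x₀ - x₁) := by
            module
          rw [this, norm_smul, norm_sub_rev]
          simp [div_eq_inv_mul]
      · intro x
        rw [hC1, h2x₂]
        simp only [Set.mem_inter_iff, Metric.mem_closedBall, dist_eq_norm]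
        constructor
        · rintro ⟨h0, h1⟩
          constructor
          · have : x₀ + x₁ - x - x₀ = -(x - x₁) := by abel
            rw [this, norm_neg]; exact h1
          · have : x₀ + x₁ - x - x₁ = -(x - x₀) := by abel
            rw [this, norm_neg]; exact h0
        · rintro ⟨h0, h1⟩
          constructor
          · have : x - x₀ = -(x₀ + x₁ - x - x₁) := by abel
            rw [this, norm_neg]; exact h1
          · have : x - x₁ = -(x₀ + x₁ - x - x₀) := by abel
            rw [this, norm_neg]; exact h0
    | succ n hn ih =>
      obtain ⟨⟨hmem, hsymm⟩, hsub⟩ := ih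
      have hbdd : Bornology.IsBounded (C n) := by
        refine (Metric.isBounded_closedBall (x := x₀)
          (r := ‖x₁ - x₀‖ / 2)).subset ?_
        intro x hx
        exact (hC1 ▸ hsub hx).1
      have hdist : ∀ x ∈ C n, ∀ y ∈ C n, dist x y ≤ Metric.diam (C n) :=
        fun x hx y hy => Metric.dist_le_diam_of_mem hbdd hx hy
      have hCn1 := hCsucc n hn
      have hsub' : C (n + 1) ⊆ C n := by
        rw [hCn1]; exact fun x hx => hx.1
      refine ⟨⟨?_, ?_⟩, hsub'.trans hsub⟩
      · rw [hCn1]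
        refine ⟨hmem, fun y hy => ?_⟩
        rw [Metric.mem_closedBall]
        have hy' : (2 : ℝ) • x₂ - y ∈ C n := (hsymm y).mp hy
        have := hdist y hy _ hy'
        have heq : y - ((2 : ℝ) • x₂ - y) = (2 : ℝ) • (y - x₂) := by
          rw [smul_sub, two_smul, two_smul]; abel
        rw [dist_eq_norm, heq, norm_smul] at this
        rw [dist_comm, dist_eq_norm, norm_sub_rev]
        simp only [Real.norm_ofNat] at this
        linarith
      · intro x
        rw [hCn1]
        simp only [Set.mem_setOf_eq]
        constructor
        · rintro ⟨hx, hball⟩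
          refine ⟨(hsymm x).mp hx, fun y hy => ?_⟩
          have hy' : (2 : ℝ) • x₂ - y ∈ C n := (hsymm y).mp hy
          have := hball hy'
          rw [Metric.mem_closedBall, dist_eq_norm] at this ⊢
          have heq : y - ((2 : ℝ) • x₂ - x) = -((2 : ℝ) • x₂ - y - x) := by abel
          rw [heq, norm_neg]; exact this
        · rintro ⟨hx, hball⟩
          have hx' : x ∈ C n := by
            have := (hsymm x).mp ((hsymm _).mpr (by simpa using hx))
            simpa using (hsymm _).mpr hx
          refine ⟨hx', fun y hy => ?_⟩
          have hy' : (2 : ℝ) • x₂ - y ∈ C n := (hsymm y).mp hy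
          have := hball hy'
          rw [Metric.mem_closedBall, dist_eq_norm] at this ⊢
          have heq : y - x = -((2 : ℝ) • x₂ - y - ((2 : ℝ) • x₂ - x)) := by abel
          rw [heq, norm_neg]; exact this
  exact fun n hn => (key n hn).1
end

section
/- Let X be a real Banach space, x₀ ∈ X, r > 0, and let D ⊂ X satisfy B(x₀, r) ⊂ D. Let g : D → X be an isometry with g(x) = x for all x ∈ B(x₀, r), and let x₁ ∈ D ∩ B(x₀, 2r). Define C₁ = B(x₀, ‖x₁ − x₀‖/2) ∩ B(x₁, ‖x₁ − x₀‖/2) and Ĉ₁ = B(x₀, ‖x₁ − x₀‖/2) ∩ B(g(x₁), ‖x₁ − x₀‖/2), and inductively C_{n+1} = {x ∈ C_n : C_n ⊂ B(x, δ(C_n)/2)} and Ĉ_{n+1} = {x ∈ Ĉ_n : Ĉ_n ⊂ B(x, δ(Ĉ_n)/2)}, where δ denotes diameter. Then Ĉ_n = g(C_n) for every n ≥ 1. -/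
/-- The Mazur--Ulam sequence of sets is carried by the isometry `g`:
`Ch_n = g(C_n)` for every `n ≥ 1`. -/
theorem mazurUlam_sets_image
    {X : Type*} [NormedAddCommGroup X] [NormedSpace ℝ X] [CompleteSpace X]
    (x₀ : X) (r : ℝ) (hr : 0 < r) (D : Set X) (hD : Metric.closedBall x₀ r ⊆ D)
    (g : X → X)
    (hg : ∀ y₁ ∈ D, ∀ y₂ ∈ D, ‖g y₁ - g y₂‖ = ‖y₁ - y₂‖)
    (hfix : ∀ x ∈ Metric.closedBall x₀ r, g x = x)
    (x₁ : X) (hx₁ : x₁ ∈ D ∩ Metric.closedBall x₀ (2 * r))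
    (C Ch : ℕ → Set X)
    (hC1 : C 1 = Metric.closedBall x₀ (‖x₁ - x₀‖ / 2) ∩ Metric.closedBall x₁ (‖x₁ - x₀‖ / 2))
    (hCh1 : Ch 1 = Metric.closedBall x₀ (‖x₁ - x₀‖ / 2) ∩
      Metric.closedBall (g x₁) (‖x₁ - x₀‖ / 2))
    (hCsucc : ∀ n ≥ 1, C (n + 1) =
      {x ∈ C n | C n ⊆ Metric.closedBall x (Metric.diam (C n) / 2)})
    (hChsucc : ∀ n ≥ 1, Ch (n + 1) =
      {x ∈ Ch n | Ch n ⊆ Metric.closedBall x (Metric.diam (Ch n) / 2)}) :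
    ∀ n ≥ 1, Ch n = g '' C n := by
  have hs : ‖x₁ - x₀‖ / 2 ≤ r := by
    have h := hx₁.2
    rw [Metric.mem_closedBall, dist_eq_norm] at h
    linarith
  have hsub1 : C 1 ⊆ Metric.closedBall x₀ r := by
    rw [hC1]
    intro x hx
    exact Metric.closedBall_subset_closedBall hs hx.1
  have hmono : ∀ n ≥ 1, C n ⊆ Metric.closedBall x₀ r := by
    intro n hn
    induction n with
    | zero => omega
    | succ m ih =>
      by_cases hm : 1 ≤ m
      · rw [hCsucc m hm]
        exact fun x hx => ih hm hx.1
      · have hm0 : m = 0 := by omega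
        subst hm0
        exact hsub1
  have hfixn : ∀ n ≥ 1, ∀ x ∈ C n, g x = x :=
    fun n hn x hx => hfix x (hmono n hn hx)
  have himg : ∀ n ≥ 1, g '' C n = C n := by
    intro n hn
    rw [Set.image_congr (fun x hx => hfixn n hn x hx), Set.image_id']
  -- key: for points in the small ball around x₀, distances to g x₁ and x₁ agree
  have hkey : ∀ x : X, dist x x₀ ≤ ‖x₁ - x₀‖ / 2 → dist x (g x₁) = dist x x₁ := by
    intro x hx
    have hxr : x ∈ Metric.closedBall x₀ r :=
      Metric.closedBall_subset_closedBall hs hx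
    have hxD : x ∈ D := hD hxr
    have := hg x hxD x₁ hx₁.1
    rw [hfix x hxr] at this
    rw [dist_eq_norm, dist_eq_norm, this]
  have hCeq : ∀ n ≥ 1, Ch n = C n := by
    intro n hn
    induction n with
    | zero => omega
    | succ m ih =>
      by_cases hm : 1 ≤ m
      · rw [hChsucc m hm, hCsucc m hm, ih hm]
      · have hm0 : m = 0 := by omega
        subst hm0
        rw [hCh1, hC1]
        ext x
        simp only [Set.mem_inter_iff, Metric.mem_closedBall]
        constructor
        · rintro ⟨h1, h2⟩
          exact ⟨h1, by rwa [hkey x h1] at h2⟩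
        · rintro ⟨h1, h2⟩
          exact ⟨h1, by rwa [hkey x h1]⟩
  intro n hn
  rw [hCeq n hn, himg n hn]
end

section
/- Let X be a real Banach space and let F : B(0, 1) → X be an isometry. Suppose there exist z ∈ B(0, 1) and ρ > 0 such that B(z, ρ) ⊂ B(0, 1) and F(x) = x for every x ∈ B(z, ρ). Then F(x) = x for every x ∈ B(0, 1). -/
/-!
Write `d = F x - x`. If `F` fixes `closedBall c r` pointwise, the isometry property says that
translation by `d` preserves the norm on the ball of radius `r` around `x - c`. By convexity of
the norm, every point `v` of that ball then minimizes the norm on its line `v + ℝ d`, and when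
`‖x - c‖ < 2 r` this forces `d = 0`. So a fixed ball fixes everything within twice its radius.
Shrinking the initial ball homothetically towards `x` by a ratio close to `1`, each ball lies
within twice the radius of the previous one, so all of them are fixed, and their centres
converge to `x`.
-/

open Metric Set Filter Topology

section Norm

variable {X : Type*} [NormedAddCommGroup X] [NormedSpace ℝ X]

theorem norm_add_smul_le_of_norm_add_eq {y d : X} (h : ‖y + d‖ = ‖y‖) {u : ℝ}
    (hu₀ : 0 ≤ u) (hu₁ : u ≤ 1) : ‖y + u • d‖ ≤ ‖y‖ := by
  calc ‖y + u • d‖ = ‖(1 - u) • y + u • (y + d)‖ := by congr 1; module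
    _ ≤ (1 - u) * ‖y‖ + u * ‖y + d‖ :=
      (convexOn_univ_norm).2 (mem_univ y) (mem_univ _) (sub_nonneg.2 hu₁) hu₀ (by ring)
    _ = ‖y‖ := by rw [h]; ring

theorem norm_le_norm_add_smul_of_norm_add_eq {v d : X} {s : ℝ} (h₀ : ‖v + d‖ = ‖v‖)
    (h₁ : ‖v + s • d + d‖ = ‖v + s • d‖) (hs : |s| ≤ 1) : ‖v‖ ≤ ‖v + s • d‖ := by
  rcases le_or_gt 0 s with hs₀ | hs₀
  · calc ‖v‖ = ‖v + s • d + (1 - s) • d‖ := by rw [← h₀]; congr 1; module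
      _ ≤ ‖v + s • d‖ :=
        norm_add_smul_le_of_norm_add_eq h₁ (by linarith [le_abs_self s]) (by linarith)
  · calc ‖v‖ = ‖v + s • d + (-s) • d‖ := by congr 1; module
      _ ≤ ‖v + s • d‖ :=
        norm_add_smul_le_of_norm_add_eq h₁ (by linarith) (by linarith [neg_abs_le s])

theorem norm_le_norm_add_smul_of_mem_ball {w d v : X} {r : ℝ}
    (H : ∀ y ∈ ball w r, ‖y + d‖ = ‖y‖) (hv : v ∈ ball w r) (s : ℝ) :
    ‖v‖ ≤ ‖v + s • d‖ := by
  have hconv : ConvexOn ℝ univ (fun s : ℝ => ‖v + s • d‖) :=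
    ((convexOn_univ_norm).translate_right v).comp_linearMap (LinearMap.toSpanSingleton ℝ X d)
  have hloc : IsLocalMin (fun s : ℝ => ‖v + s • d‖) 0 := by
    have hball : ∀ᶠ s in 𝓝 (0 : ℝ), v + s • d ∈ ball w r :=
      (by fun_prop : Continuous fun s : ℝ => v + s • d).continuousAt.eventually_mem
        (by simpa using isOpen_ball.mem_nhds hv)
    filter_upwards [hball, closedBall_mem_nhds (0 : ℝ) one_pos] with s hs hs₁
    simpa using norm_le_norm_add_smul_of_norm_add_eq (H v hv) (H _ hs) (by simpa using hs₁)
  simpa using IsMinOn.of_isLocalMin_of_convex_univ hloc hconv s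

theorem eq_zero_of_forall_norm_le_norm_add_smul {w d : X} {r : ℝ}
    (hmin : ∀ v ∈ closedBall w r, ∀ s : ℝ, ‖v‖ ≤ ‖v + s • d‖)
    (hrw : r < ‖w‖) (hw : ‖w‖ < 2 * r) : d = 0 := by
  by_contra hd
  have hr : 0 < r := by linarith [norm_nonneg w]
  have hm : ‖w‖ ≠ 0 := (hr.trans hrw).ne'
  have hmr : 0 < ‖w‖ - r := by linarith
  have hd₀ : 0 < ‖d‖ := norm_pos_iff.2 hd
  set k := r / (‖w‖ - r) with hk_def
  have hk : 1 < k := by rw [one_lt_div] <;> linarith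
  -- Minimality at `q` against `q + (r / ‖w‖ * t) • d = (1 - r / ‖w‖) • w` bounds `‖q‖`, and `q`
  -- is a positive multiple of `w + (-k * t) • d`: the face `{t | ‖w + t • d‖ ≤ ‖w‖}` is reflected
  -- and stretched by `k > 1`, which is impossible for a bounded set.
  have hflip : ∀ t : ℝ, ‖w + t • d‖ ≤ ‖w‖ → ‖w + (-k * t) • d‖ ≤ ‖w‖ := by
    intro t ht
    set q := w - (r / ‖w‖) • (w + t • d) with hq_def
    have hq : q ∈ closedBall w r := by
      rw [mem_closedBall, dist_eq_norm, hq_def, sub_sub_cancel_left, norm_neg, norm_smul,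
        Real.norm_of_nonneg (by positivity)]
      calc r / ‖w‖ * ‖w + t • d‖ ≤ r / ‖w‖ * ‖w‖ := by gcongr
        _ = r := by field_simp
    have hq' : ‖q‖ ≤ ‖w‖ - r :=
      calc ‖q‖ ≤ ‖q + (r / ‖w‖ * t) • d‖ := hmin q hq _
        _ = ‖(1 - r / ‖w‖) • w‖ := by congr 1; module
        _ = ‖w‖ - r := by
          rw [norm_smul, Real.norm_of_nonneg (by rw [sub_nonneg, div_le_one] <;> linarith)]
          field_simp
    calc ‖w + (-k * t) • d‖ = ‖(‖w‖ / (‖w‖ - r)) • q‖ := by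
          congr 1
          rw [hq_def, hk_def]
          match_scalars <;> field_simp
      _ = ‖w‖ / (‖w‖ - r) * ‖q‖ := by rw [norm_smul, Real.norm_of_nonneg (by positivity)]
      _ ≤ ‖w‖ / (‖w‖ - r) * (‖w‖ - r) := by gcongr
      _ = ‖w‖ := by field_simp
  have hstart : ‖w + (r / ‖d‖) • d‖ ≤ ‖w‖ := by
    have hmem : w + (r / ‖d‖) • d ∈ closedBall w r := by
      rw [mem_closedBall, dist_eq_norm, add_sub_cancel_left, norm_smul,
        Real.norm_of_nonneg (by positivity), div_mul_cancel₀ _ hd₀.ne']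
    simpa using hmin _ hmem (-(r / ‖d‖))
  have hiter : ∀ n : ℕ, ‖w + ((-k) ^ n * (r / ‖d‖)) • d‖ ≤ ‖w‖ := by
    intro n
    induction n with
    | zero => simpa using hstart
    | succ n ih => simpa [pow_succ, mul_assoc, mul_comm, mul_left_comm] using hflip _ ih
  have hbound : ∀ t : ℝ, ‖w + t • d‖ ≤ ‖w‖ → |t| * ‖d‖ ≤ 2 * ‖w‖ := by
    intro t ht
    calc |t| * ‖d‖ = ‖(w + t • d) - w‖ := by
          rw [add_sub_cancel_left, norm_smul, Real.norm_eq_abs]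
      _ ≤ ‖w + t • d‖ + ‖w‖ := norm_sub_le _ _
      _ ≤ 2 * ‖w‖ := by linarith
  obtain ⟨n, hn⟩ := pow_unbounded_of_one_lt (2 * ‖w‖ / r) hk
  have h := hbound _ (hiter n)
  rw [abs_mul, abs_pow, abs_neg, abs_of_pos (by linarith : (0 : ℝ) < k),
    abs_of_pos (by positivity : 0 < r / ‖d‖), mul_assoc, div_mul_cancel₀ _ hd₀.ne'] at h
  rw [div_lt_iff₀ hr] at hn
  linarith

theorem eq_zero_of_forall_mem_ball_norm_add_eq {w d : X} {r : ℝ}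
    (H : ∀ v ∈ ball w r, ‖v + d‖ = ‖v‖) (hw : ‖w‖ < 2 * r) : d = 0 := by
  rcases lt_or_ge ‖w‖ r with hwr | hrw
  · simpa using H 0 (by simpa [dist_comm] using hwr)
  · obtain ⟨r', hr'₁, hr'₂⟩ := exists_between (show ‖w‖ / 2 < r by linarith)
    have hmin : ∀ v ∈ closedBall w r', ∀ s : ℝ, ‖v‖ ≤ ‖v + s • d‖ := fun v hv =>
      norm_le_norm_add_smul_of_mem_ball H (closedBall_subset_ball (by linarith) hv)
    exact eq_zero_of_forall_norm_le_norm_add_smul hmin (by linarith) (by linarith)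

theorem Convex.closedBall_lineMap_subset {S : Set X} (hS : Convex ℝ S) {x z : X} {ρ s : ℝ}
    (hx : x ∈ S) (hz : closedBall z ρ ⊆ S) (hs₀ : 0 < s) (hs₁ : s ≤ 1) :
    closedBall (AffineMap.lineMap x z s) (s * ρ) ⊆ S := by
  intro y hy
  have hy' : x + s⁻¹ • (y - x) ∈ closedBall z ρ := by
    rw [mem_closedBall, dist_eq_norm] at hy ⊢
    rw [AffineMap.lineMap_apply_module] at hy
    calc ‖x + s⁻¹ • (y - x) - z‖ = ‖s⁻¹ • (y - ((1 - s) • x + s • z))‖ := by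
          congr 1
          rw [eq_inv_smul_iff₀ hs₀.ne']
          simp only [smul_sub, smul_add, smul_smul, mul_inv_cancel₀ hs₀.ne', one_smul]
          module
      _ ≤ ρ := by
          rw [norm_smul, Real.norm_of_nonneg (by positivity), inv_mul_le_iff₀ hs₀]
          exact hy
  simpa [smul_smul, mul_inv_cancel₀ hs₀.ne'] using
    hS.add_smul_sub_mem hx (hz hy') ⟨hs₀.le, hs₁⟩

end Norm

section Isometry

variable {X : Type*} [NormedAddCommGroup X] {S : Set X} {F : X → X}

theorem dist_apply_self_le_two_mul
    (hF : ∀ x₁ ∈ S, ∀ x₂ ∈ S, ‖F x₁ - F x₂‖ = ‖x₁ - x₂‖) {c x : X} (hc : c ∈ S)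
    (hfix : F c = c) (hx : x ∈ S) : dist (F x) x ≤ 2 * dist x c := by
  calc dist (F x) x ≤ dist (F x) (F c) + dist (F c) x := dist_triangle _ _ _
    _ = 2 * dist x c := by
      rw [dist_eq_norm, hF x hx c hc, hfix, ← dist_eq_norm, dist_comm c]
      ring

variable [NormedSpace ℝ X]

theorem apply_eq_self_of_dist_lt_two_mul
    (hF : ∀ x₁ ∈ S, ∀ x₂ ∈ S, ‖F x₁ - F x₂‖ = ‖x₁ - x₂‖) {c x : X} {r : ℝ}
    (hsub : closedBall c r ⊆ S) (hfix : EqOn F id (closedBall c r)) (hx : x ∈ S)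
    (hxc : dist x c < 2 * r) : F x = x := by
  have H : ∀ v ∈ ball (x - c) r, ‖v + (F x - x)‖ = ‖v‖ := by
    intro v hv
    have hp : x - v ∈ closedBall c r := by
      rw [mem_ball, dist_eq_norm] at hv
      rw [mem_closedBall, dist_eq_norm, show x - v - c = -(v - (x - c)) by abel, norm_neg]
      exact hv.le
    have h := hF x hx (x - v) (hsub hp)
    rw [hfix hp, id, sub_sub_cancel] at h
    rw [← h]
    congr 1
    abel
  rw [dist_eq_norm] at hxc
  exact sub_eq_zero.1 (eq_zero_of_forall_mem_ball_norm_add_eq H hxc)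

theorem eqOn_id_closedBall_of_dist_add_lt
    (hF : ∀ x₁ ∈ S, ∀ x₂ ∈ S, ‖F x₁ - F x₂‖ = ‖x₁ - x₂‖) {c c' : X} {r r' : ℝ}
    (hsub : closedBall c r ⊆ S) (hsub' : closedBall c' r' ⊆ S)
    (hfix : EqOn F id (closedBall c r)) (h : dist c' c + r' < 2 * r) :
    EqOn F id (closedBall c' r') := fun y hy =>
  apply_eq_self_of_dist_lt_two_mul hF hsub hfix (hsub' hy)
    ((dist_triangle y c' c).trans_lt (by linarith [mem_closedBall.1 hy]))

theorem eqOn_id_closedBall_lineMap_pow (hS : Convex ℝ S)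
    (hF : ∀ x₁ ∈ S, ∀ x₂ ∈ S, ‖F x₁ - F x₂‖ = ‖x₁ - x₂‖) {x z : X} {ρ β : ℝ} (hx : x ∈ S)
    (hz : closedBall z ρ ⊆ S) (hfix : EqOn F id (closedBall z ρ)) (hβ₀ : 0 < β) (hβ₁ : β ≤ 1)
    (hβ : (1 - β) * dist x z + β * ρ < 2 * ρ) (n : ℕ) :
    EqOn F id (closedBall (AffineMap.lineMap x z (β ^ n)) (β ^ n * ρ)) := by
  have hball : ∀ n : ℕ, closedBall (AffineMap.lineMap x z (β ^ n)) (β ^ n * ρ) ⊆ S := fun n =>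
    hS.closedBall_lineMap_subset hx hz (pow_pos hβ₀ n) (pow_le_one₀ hβ₀.le hβ₁)
  induction n with
  | zero => simpa using hfix
  | succ n ih =>
    refine eqOn_id_closedBall_of_dist_add_lt hF (hball n) (hball (n + 1)) ih ?_
    have hstep : dist (β ^ (n + 1)) (β ^ n) = β ^ n * (1 - β) := by
      rw [Real.dist_eq, abs_of_nonpos (sub_nonpos.2 (pow_le_pow_of_le_one hβ₀.le hβ₁ n.le_succ)),
        pow_succ]
      ring
    rw [dist_lineMap_lineMap, hstep]
    calc β ^ n * (1 - β) * dist x z + β ^ (n + 1) * ρ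
        = β ^ n * ((1 - β) * dist x z + β * ρ) := by ring
      _ < β ^ n * (2 * ρ) := by gcongr
      _ = 2 * (β ^ n * ρ) := by ring

theorem Convex.eqOn_id_of_eqOn_id_closedBall (hS : Convex ℝ S)
    (hF : ∀ x₁ ∈ S, ∀ x₂ ∈ S, ‖F x₁ - F x₂‖ = ‖x₁ - x₂‖) {z : X} {ρ : ℝ} (hρ : 0 < ρ)
    (hz : closedBall z ρ ⊆ S) (hfix : EqOn F id (closedBall z ρ)) : EqOn F id S := by
  intro x hx
  obtain ⟨β, hβ₀, hβ₁, hβ⟩ : ∃ β : ℝ, 0 < β ∧ β < 1 ∧ (1 - β) * dist x z + β * ρ < 2 * ρ := by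
    have hδ : ρ / (2 * (dist x z + ρ)) * (dist x z + ρ) = ρ / 2 := by
      field_simp [(by positivity : dist x z + ρ ≠ 0)]
    have hδ₀ : 0 < ρ / (2 * (dist x z + ρ)) := by positivity
    have hL : 0 ≤ dist x z := dist_nonneg
    exact ⟨1 - ρ / (2 * (dist x z + ρ)), by nlinarith, by linarith, by nlinarith⟩
  have hcentre : ∀ n : ℕ, dist (F x) x ≤ 2 * (β ^ n * dist x z) := fun n => by
    have hmem := mem_closedBall_self (x := AffineMap.lineMap x z (β ^ n))
      (by positivity : 0 ≤ β ^ n * ρ)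
    have hfixn := eqOn_id_closedBall_lineMap_pow hS hF hx hz hfix hβ₀ hβ₁.le hβ n
    simpa [dist_left_lineMap, abs_of_pos hβ₀] using
      dist_apply_self_le_two_mul hF (hS.closedBall_lineMap_subset hx hz (pow_pos hβ₀ n)
        (pow_le_one₀ hβ₀.le hβ₁.le) hmem) (hfixn hmem) hx
  have hlim : Tendsto (fun n : ℕ => 2 * (β ^ n * dist x z)) atTop (𝓝 0) := by
    simpa using ((tendsto_pow_atTop_nhds_zero_of_lt_one hβ₀.le hβ₁).mul_const _).const_mul 2
  exact dist_le_zero.1 (ge_of_tendsto' hlim hcentre)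

end Isometry

theorem isometry_unitBall_fix_small_ball_eq_id_general
    {X : Type*} [NormedAddCommGroup X] [NormedSpace ℝ X]
    (F : X → X)
    (hF : ∀ x₁ ∈ Metric.closedBall (0 : X) 1, ∀ x₂ ∈ Metric.closedBall (0 : X) 1,
      ‖F x₁ - F x₂‖ = ‖x₁ - x₂‖)
    (z : X) (ρ : ℝ) (hρ : 0 < ρ)
    (hsub : Metric.closedBall z ρ ⊆ Metric.closedBall (0 : X) 1)
    (hfix : ∀ x ∈ Metric.closedBall z ρ, F x = x) :
    ∀ x ∈ Metric.closedBall (0 : X) 1, F x = x := fun _ hx =>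
  (convex_closedBall 0 1).eqOn_id_of_eqOn_id_closedBall hF hρ hsub (fun y hy => hfix y hy) hx

/-- An isometry of the closed unit ball into `X` that fixes some small ball
pointwise is the identity on the whole unit ball. -/
theorem isometry_unitBall_fix_small_ball_eq_id
    {X : Type*} [NormedAddCommGroup X] [NormedSpace ℝ X] [CompleteSpace X]
    (F : X → X)
    (hF : ∀ x₁ ∈ Metric.closedBall (0 : X) 1, ∀ x₂ ∈ Metric.closedBall (0 : X) 1,
      ‖F x₁ - F x₂‖ = ‖x₁ - x₂‖)
    (z : X) (hz : z ∈ Metric.closedBall (0 : X) 1) (ρ : ℝ) (hρ : 0 < ρ)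
    (hsub : Metric.closedBall z ρ ⊆ Metric.closedBall (0 : X) 1)
    (hfix : ∀ x ∈ Metric.closedBall z ρ, F x = x) :
    ∀ x ∈ Metric.closedBall (0 : X) 1, F x = x :=
  isometry_unitBall_fix_small_ball_eq_id_general F hF z ρ hρ hsub hfix
end

section
/- Let X be a real Banach space and F : B(0, 1) → X an isometry. Let z₀ ∈ X with ‖z₀‖ = 1 and 0 ≤ λ < 1, and suppose there exists ρ > 0 such that B(λz₀, ρ) ⊂ B(0, 1) and F(x) = x for all x ∈ B(λz₀, ρ). Then for every μ with 2λ − 1 < μ < 1 there exists ρ' > 0 such that B(μz₀, ρ') ⊂ B(0, 1) and F(x) = x for all x ∈ B(μz₀, ρ'). -/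
/-!
An isometry fixing the ball `B(q, r)` fixes every point `x` of its domain with `‖x - q‖ < 2r`,
because the distances to `B(q, r)` determine such a point; chaining balls of a fixed radius along
the segment from `λ z₀` to `μ z₀`, which stays inside the open unit ball since `|μ| < 1`, then
moves the fixed ball from `λ z₀` to `μ z₀`.

For the determination, put `c = x - q`, and suppose `F x - q = c + δ u` with `‖u‖ = 1`, `δ > 0`.
The convex function `ξ ↦ ‖c + ξ u‖` is `δ`-periodic on `[-r, r]`, hence constant on an interval;
homogeneity of the norm turns flatness on an interval into flatness on an interval larger by the
factor `r / (‖c‖ - r) > 1`, which eventually contradicts `‖c + ξ u‖ ≥ |ξ| - ‖c‖`.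
-/

open Set Metric

theorem ConvexOn.eq_left_of_forall_add_eq {g : ℝ → ℝ} (hg : ConvexOn ℝ univ g) {a b p : ℝ}
    (hp : 0 < p) (hpb : a + p ≤ b) (hper : ∀ x ∈ Icc a b, g (x + p) = g x) :
    ∀ y ∈ Icc a (b + p), g y = g a := by
  rintro y ⟨hay, hyb⟩
  have hap : g (a + p) = g a := hper a ⟨le_rfl, by linarith⟩
  apply le_antisymm
  · rcases le_or_gt y (a + p) with hy | hy
    · simpa [hap] using hg.le_max_of_mem_Icc trivial trivial ⟨hay, hy⟩
    · have hyp : g (y - p + p) = g (y - p) := hper (y - p) ⟨by linarith, by linarith⟩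
      rw [sub_add_cancel] at hyp
      rw [hyp]
      exact hg.le_left_of_right_le'' trivial trivial (by linarith) (by linarith) hyp.le
  · rcases le_or_gt (a + p) y with hy | hy
    · rw [← hap]
      exact hg.le_right_of_left_le'' trivial trivial (by linarith) hy hap.ge
    · have hyp : g (y + p) = g y := hper y ⟨hay, by linarith⟩
      simpa [hap, hyp] using
        hg.le_max_of_mem_Icc trivial trivial (x := y) (y := y + p) (z := a + p) ⟨hy.le, by linarith⟩

theorem convexOn_norm_add_smul {X : Type*} [NormedAddCommGroup X] [NormedSpace ℝ X] (c u : X) :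
    ConvexOn ℝ univ fun ξ : ℝ => ‖c + ξ • u‖ := by
  refine ⟨convex_univ, fun x _ y _ a b ha hb hab => ?_⟩
  obtain rfl : b = 1 - a := by linarith
  calc ‖c + (a • x + (1 - a) • y) • u‖ = ‖a • (c + x • u) + (1 - a) • (c + y • u)‖ := by
        congr 1; module
    _ ≤ a • ‖c + x • u‖ + (1 - a) • ‖c + y • u‖ := by
        refine (norm_add_le _ _).trans_eq ?_
        rw [norm_smul_of_nonneg ha, norm_smul_of_nonneg hb]; rfl

section DistancesToBall

variable {X : Type*} [NormedAddCommGroup X] [NormedSpace ℝ X] {c d u : X} {r δ : ℝ}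

theorem norm_add_smul_eq_of_ball_translation_base (hu : ‖u‖ = 1) (hδ : 0 < δ) (hδr : δ ≤ 2 * r)
    (htrans : ∀ v : X, ‖v‖ ≤ r → ‖c - v + δ • u‖ = ‖c - v‖) :
    ∀ ξ ∈ Icc (-r) (r + δ), ‖c + ξ • u‖ = ‖c‖ := by
  have hconst := (convexOn_norm_add_smul c u).eq_left_of_forall_add_eq (a := -r) (b := r) hδ
    (by linarith) fun ξ hξ => by
      have hv : ‖-ξ • u‖ ≤ r := by
        rw [norm_smul, hu, mul_one, Real.norm_eq_abs, abs_neg]; exact abs_le.2 hξ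
      simpa [sub_neg_eq_add, add_smul, add_assoc] using htrans _ hv
  intro ξ hξ
  simpa using (hconst ξ hξ).trans (hconst 0 ⟨by linarith, by linarith⟩).symm

theorem norm_add_smul_eq_of_ball_translation_step (hδ : 0 < δ) {ρ P : ℝ}
    (hρ0 : 0 < ρ) (hρ : ρ * (‖c‖ - r) = r) (hδP : δ ≤ 2 * ρ * P)
    (hflat : ∀ ξ ∈ Icc (-P) (P + δ), ‖c + ξ • u‖ = ‖c‖)
    (htrans : ∀ v : X, ‖v‖ ≤ r → ‖c - v + δ • u‖ = ‖c - v‖) :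
    ∀ ξ ∈ Icc (-(ρ * (P + δ))) (ρ * (P + δ) + δ), ‖c + ξ • u‖ = ‖c‖ := by
  obtain ⟨κ, hκ0, hκ⟩ : ∃ κ > 0, κ * (1 + ρ) = 1 :=
    ⟨(1 + ρ)⁻¹, by positivity, inv_mul_cancel₀ (by positivity)⟩
  have hconst := (convexOn_norm_add_smul c u).eq_left_of_forall_add_eq (a := -(ρ * (P + δ)))
    (b := ρ * P) (p := (1 + ρ) * δ) (by positivity) (by linarith) fun η hη => by
      -- `v = ρκ (c + ξ₀ u)` lies on the sphere of radius `r` since `ξ₀ = -η/ρ` is in the flat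
      -- interval, and `c - v = κ (c + η u)`: by homogeneity, the translation by `δ u` at `c - v`
      -- becomes a translation by `(1 + ρ) δ u` at `c + η u`.
      have hξ₀ : -η / ρ ∈ Icc (-P) (P + δ) := by
        rw [neg_div, mem_Icc, neg_le_neg_iff, neg_le, div_le_iff₀ hρ0, le_div_iff₀ hρ0]
        constructor <;> linarith [hη.1, hη.2]
      have hv : ‖(ρ * κ) • (c + (-η / ρ) • u)‖ ≤ r := by
        rw [norm_smul_of_nonneg (by positivity), hflat _ hξ₀]
        exact (by linear_combination κ * hρ + r * hκ : ρ * κ * ‖c‖ = r).le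
      have key := htrans _ hv
      have e₁ : c - (ρ * κ) • (c + (-η / ρ) • u) = κ • (c + η • u) := by
        match_scalars
        · linear_combination -hκ
        · field_simp
      have e₂ : κ • (c + η • u) + δ • u = κ • (c + (η + (1 + ρ) * δ) • u) := by
        match_scalars
        · ring
        · linear_combination -δ * hκ
      rw [e₁, e₂, norm_smul_of_nonneg hκ0.le, norm_smul_of_nonneg hκ0.le] at key
      exact mul_left_cancel₀ hκ0.ne' key
  intro ξ hξ
  have h0 : (0 : ℝ) ∈ Icc (-(ρ * (P + δ))) (ρ * P + (1 + ρ) * δ) := by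
    constructor <;> nlinarith
  have hξ' : ξ ∈ Icc (-(ρ * (P + δ))) (ρ * P + (1 + ρ) * δ) := by
    constructor <;> linarith [hξ.1, hξ.2]
  simpa using (hconst ξ hξ').trans (hconst 0 h0).symm

theorem eq_zero_of_ball_translation (hu : ‖u‖ = 1) (hr : 0 < r) (hrc : r < ‖c‖)
    (hc : ‖c‖ < 2 * r) (hδ0 : 0 ≤ δ) (hδ : δ ≤ 2 * (‖c‖ - r))
    (htrans : ∀ v : X, ‖v‖ ≤ r → ‖c - v + δ • u‖ = ‖c - v‖) : δ = 0 := by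
  by_contra hne
  have hδpos : 0 < δ := lt_of_le_of_ne hδ0 (Ne.symm hne)
  set ρ := r / (‖c‖ - r)
  have hρ : ρ * (‖c‖ - r) = r := div_mul_cancel₀ _ (by linarith)
  have hρ1 : 1 < ρ := (one_lt_div (by linarith)).2 (by linarith)
  have hflat : ∀ n : ℕ, ∃ P, ρ ^ n * r ≤ P ∧ ∀ ξ ∈ Icc (-P) (P + δ), ‖c + ξ • u‖ = ‖c‖ := by
    intro n
    induction n with
    | zero =>
      exact ⟨r, by simp, norm_add_smul_eq_of_ball_translation_base hu hδpos (by linarith) htrans⟩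
    | succ n ih =>
      obtain ⟨P, hP, hflat⟩ := ih
      have hrP : r ≤ P := le_trans (le_mul_of_one_le_left hr.le (one_le_pow₀ hρ1.le)) hP
      refine ⟨ρ * (P + δ), ?_,
        norm_add_smul_eq_of_ball_translation_step hδpos (by positivity) hρ ?_ hflat htrans⟩
      · rw [pow_succ']
        nlinarith
      · nlinarith
  obtain ⟨n, hn⟩ := pow_unbounded_of_one_lt (2 * ‖c‖ / r) hρ1
  obtain ⟨P, hP, hflatP⟩ := hflat n
  rw [div_lt_iff₀ hr] at hn
  have hcP := hflatP P ⟨by linarith [norm_nonneg c], by linarith⟩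
  have : ‖P • u‖ ≤ ‖c + P • u‖ + ‖c‖ := by
    simpa using norm_sub_le (c + P • u) c
  rw [norm_smul, hu, mul_one, Real.norm_eq_abs, abs_of_pos (by linarith), hcP] at this
  linarith

theorem norm_sub_le_of_forall_norm_sub_eq (hr : 0 < r) (hrc : r ≤ ‖c‖)
    (h : ∀ v : X, ‖v‖ ≤ r → ‖c - v‖ = ‖d - v‖) : ‖d - c‖ ≤ 2 * (‖c‖ - r) := by
  have hc : 0 < ‖c‖ := hr.trans_le hrc
  have hv : ‖(r / ‖c‖) • c‖ = r := by
    rw [norm_smul_of_nonneg (by positivity), div_mul_cancel₀ _ hc.ne']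
  have hcv : ‖c - (r / ‖c‖) • c‖ = ‖c‖ - r := by
    have hfrac : 0 ≤ 1 - r / ‖c‖ := by rw [sub_nonneg, div_le_one hc]; exact hrc
    rw [show c - (r / ‖c‖) • c = (1 - r / ‖c‖) • c by module, norm_smul_of_nonneg hfrac, sub_mul,
      one_mul, div_mul_cancel₀ _ hc.ne']
  calc ‖d - c‖ ≤ ‖d - (r / ‖c‖) • c‖ + ‖(r / ‖c‖) • c - c‖ := norm_sub_le_norm_sub_add_norm_sub ..
    _ = 2 * (‖c‖ - r) := by rw [norm_sub_rev _ c, ← h _ hv.le, hcv]; ring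

theorem eq_of_forall_norm_sub_eq (hr : 0 < r) (hc : ‖c‖ < 2 * r)
    (h : ∀ v : X, ‖v‖ ≤ r → ‖c - v‖ = ‖d - v‖) : d = c := by
  rcases le_or_gt ‖c‖ r with hcr | hrc
  · simpa [sub_eq_zero, eq_comm] using h c hcr
  by_contra hne
  have hdc : d - c ≠ 0 := sub_ne_zero.2 hne
  have htrans : ∀ v : X, ‖v‖ ≤ r →
      ‖c - v + ‖d - c‖ • (‖d - c‖⁻¹ • (d - c))‖ = ‖c - v‖ := fun v hv => by
    rw [smul_inv_smul₀ (norm_ne_zero_iff.2 hdc), h v hv]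
    congr 1; abel
  exact hdc (norm_eq_zero.1 (eq_zero_of_ball_translation (norm_smul_inv_norm hdc) hr hrc hc
    (norm_nonneg _) (norm_sub_le_of_forall_norm_sub_eq hr hrc.le h) htrans))

end DistancesToBall

section IsometryFixingBall

variable {X : Type*} [NormedAddCommGroup X] [NormedSpace ℝ X] {F : X → X} {S : Set X}

theorem apply_eq_self_of_norm_sub_lt_two_mul
    (hF : ∀ x₁ ∈ S, ∀ x₂ ∈ S, ‖F x₁ - F x₂‖ = ‖x₁ - x₂‖) {q x : X} {r : ℝ} (hr : 0 < r)
    (hqS : closedBall q r ⊆ S) (hfix : ∀ w ∈ closedBall q r, F w = w) (hx : x ∈ S)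
    (hxq : ‖x - q‖ < 2 * r) : F x = x := by
  rw [← sub_left_inj (a := q)]
  refine eq_of_forall_norm_sub_eq hr hxq fun v hv => ?_
  have hv' : q + v ∈ closedBall q r := by simpa [dist_eq_norm] using hv
  have hiso := hF x hx (q + v) (hqS hv')
  rw [hfix _ hv'] at hiso
  rw [sub_sub, sub_sub, ← hiso]

theorem apply_eq_self_on_closedBall_of_dist_lt
    (hF : ∀ x₁ ∈ S, ∀ x₂ ∈ S, ‖F x₁ - F x₂‖ = ‖x₁ - x₂‖) {p p' : X} {s : ℝ} (hs : 0 < s)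
    (hpS : closedBall p s ⊆ S) (hp'S : closedBall p' s ⊆ S) (hpp' : dist p' p < s)
    (hfix : ∀ w ∈ closedBall p s, F w = w) : ∀ x ∈ closedBall p' s, F x = x := by
  intro x hx
  refine apply_eq_self_of_norm_sub_lt_two_mul hF hs hpS hfix (hp'S hx) ?_
  rw [← dist_eq_norm]
  linarith [dist_triangle x p' p, mem_closedBall.1 hx]

theorem apply_eq_self_on_closedBall_of_segment
    (hF : ∀ x₁ ∈ S, ∀ x₂ ∈ S, ‖F x₁ - F x₂‖ = ‖x₁ - x₂‖) {a b : X} {s : ℝ} (hs : 0 < s)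
    (hseg : ∀ x ∈ segment ℝ a b, closedBall x s ⊆ S) (hfix : ∀ w ∈ closedBall a s, F w = w) :
    ∀ x ∈ closedBall b s, F x = x := by
  obtain ⟨N, hN⟩ := exists_nat_gt (dist a b / s)
  have hN0 : (0 : ℝ) < N := lt_of_le_of_lt (by positivity) hN
  have hstep : dist a b / N < s := by
    rwa [div_lt_iff₀ hN0, mul_comm, ← div_lt_iff₀ hs]
  let p : ℕ → X := fun k => AffineMap.lineMap a b ((k : ℝ) / N)
  have hpS : ∀ k ≤ N, closedBall (p k) s ⊆ S := fun k hk =>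
    hseg _ (lineMap_mem_segment ℝ a b
      ⟨by positivity, div_le_one_of_le₀ (by exact_mod_cast hk) hN0.le⟩)
  have hfix_p : ∀ k ≤ N, ∀ w ∈ closedBall (p k) s, F w = w := by
    intro k
    induction k with
    | zero => exact fun _ => by simpa [p] using hfix
    | succ k ih =>
      intro hk
      refine apply_eq_self_on_closedBall_of_dist_lt hF hs (hpS k (by omega)) (hpS (k + 1) hk) ?_
        (ih (by omega))
      simp only [p, dist_lineMap_lineMap, Real.dist_eq]
      rwa [Nat.cast_succ, ← sub_div, add_sub_cancel_left, abs_of_pos (by positivity),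
        one_div_mul_eq_div]
  simpa [p, hN0.ne'] using hfix_p N le_rfl

end IsometryFixingBall

theorem isometry_unitBall_fix_propagates_general
    {X : Type*} [NormedAddCommGroup X] [NormedSpace ℝ X]
    (F : X → X)
    (hF : ∀ x₁ ∈ Metric.closedBall (0 : X) 1, ∀ x₂ ∈ Metric.closedBall (0 : X) 1,
      ‖F x₁ - F x₂‖ = ‖x₁ - x₂‖)
    (z₀ : X) (hz₀ : ‖z₀‖ = 1) (lam : ℝ) (hlam0 : 0 ≤ lam) (hlam1 : lam < 1)
    (ρ : ℝ) (hρ : 0 < ρ)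
    (hfix : ∀ x ∈ Metric.closedBall (lam • z₀) ρ, F x = x) :
    ∀ μ : ℝ, 2 * lam - 1 < μ → μ < 1 → ∃ ρ' > 0,
      Metric.closedBall (μ • z₀) ρ' ⊆ Metric.closedBall (0 : X) 1 ∧
      ∀ x ∈ Metric.closedBall (μ • z₀) ρ', F x = x := by
  intro μ hμ hμ1
  set m := max lam |μ|
  have hm : m < 1 := max_lt hlam1 (abs_lt.2 ⟨by linarith, hμ1⟩)
  set s := min ρ (1 - m)
  have hs : 0 < s := lt_min hρ (by linarith)
  have hcenter : ∀ t : ℝ, |t| ≤ m → t • z₀ ∈ closedBall (0 : X) (1 - s) := fun t ht => by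
    rw [mem_closedBall_zero_iff, norm_smul, hz₀, mul_one, Real.norm_eq_abs]
    linarith [min_le_right ρ (1 - m)]
  have hball : ∀ x ∈ segment ℝ (lam • z₀) (μ • z₀), closedBall x s ⊆ closedBall 0 1 := by
    intro x hx
    have hx' := (convex_closedBall (0 : X) (1 - s)).segment_subset
      (hcenter lam ((abs_of_nonneg hlam0).trans_le (le_max_left _ _)))
      (hcenter μ (le_max_right _ _)) hx
    exact closedBall_subset_closedBall' (by rw [mem_closedBall] at hx'; linarith)
  exact ⟨s, hs, hball _ (right_mem_segment _ _ _),
    apply_eq_self_on_closedBall_of_segment hF hs hball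
      fun w hw => hfix w (closedBall_subset_closedBall (min_le_left _ _) hw)⟩

/-- Propagation step along a radius: if `F` fixes a small ball around `λ • z₀`
pointwise, it fixes a small ball around `μ • z₀` for every `μ ∈ (2λ - 1, 1)`. -/
theorem isometry_unitBall_fix_propagates
    {X : Type*} [NormedAddCommGroup X] [NormedSpace ℝ X] [CompleteSpace X]
    (F : X → X)
    (hF : ∀ x₁ ∈ Metric.closedBall (0 : X) 1, ∀ x₂ ∈ Metric.closedBall (0 : X) 1,
      ‖F x₁ - F x₂‖ = ‖x₁ - x₂‖)
    (z₀ : X) (hz₀ : ‖z₀‖ = 1) (lam : ℝ) (hlam0 : 0 ≤ lam) (hlam1 : lam < 1)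
    (ρ : ℝ) (hρ : 0 < ρ)
    (hsub : Metric.closedBall (lam • z₀) ρ ⊆ Metric.closedBall (0 : X) 1)
    (hfix : ∀ x ∈ Metric.closedBall (lam • z₀) ρ, F x = x) :
    ∀ μ : ℝ, 2 * lam - 1 < μ → μ < 1 → ∃ ρ' > 0,
      Metric.closedBall (μ • z₀) ρ' ⊆ Metric.closedBall (0 : X) 1 ∧
      ∀ x ∈ Metric.closedBall (μ • z₀) ρ', F x = x :=
  isometry_unitBall_fix_propagates_general F hF z₀ hz₀ lam hlam0 hlam1 ρ hρ hfix
end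

section
/- Let X and Y be real Banach spaces, x₀ ∈ X and r > 0. Let f : B(x₀, r) → Y be an isometry and let y₁ be an interior point of the image f(B(x₀, r)). Then there exists r₁ > 0 such that, with x₁ the (unique) point of B(x₀, r) with f(x₁) = y₁, one has B(x₁, r₁) ⊂ B(x₀, r) and f(B(x₁, r₁)) = B(y₁, r₁). -/
/-! Pick `ε > 0` with `B(y₁, ε) ⊆ f(B(x₀, r))`, let `x₁` be the preimage of `y₁` and `r₁ = min ε r`.
If `x₁ ≠ x₀`, the point `y` at distance `r₁` beyond `y₁` on the ray from `f x₀` through `y₁` lies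
in the image, and its preimage `x` has `‖x - x₀‖ = ‖x₁ - x₀‖ + r₁`; as `‖x - x₀‖ ≤ r`, the ball
`B(x₁, r₁)` lies in `B(x₀, r)`. On it `f` is an isometry onto its image, which then is `B(y₁, r₁)`. -/

open Metric

theorem exists_dist_eq_and_dist_eq_dist_add {E : Type*} [NormedAddCommGroup E] [NormedSpace ℝ E]
    {p q : E} (hqp : q ≠ p) {ρ : ℝ} (hρ : 0 ≤ ρ) :
    ∃ y, dist y q = ρ ∧ dist y p = dist q p + ρ := by
  have hd : 0 < ‖q - p‖ := norm_pos_iff.2 (sub_ne_zero.2 hqp)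
  refine ⟨q + (ρ / ‖q - p‖) • (q - p), ?_, ?_⟩
  · rw [dist_eq_norm, add_sub_cancel_left, norm_smul, Real.norm_of_nonneg (by positivity),
      div_mul_cancel₀ _ hd.ne']
  · rw [dist_eq_norm, dist_eq_norm,
      show q + (ρ / ‖q - p‖) • (q - p) - p = (1 + ρ / ‖q - p‖) • (q - p) by module,
      norm_smul, Real.norm_of_nonneg (by positivity)]
    field_simp

theorem image_closedBall_eq_of_isometry_domRestrict {X Y : Type*} [PseudoMetricSpace X]
    [PseudoMetricSpace Y] {f : X → Y} {s : Set X} {x₁ : X} {ρ : ℝ}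
    (hf : Isometry (s.domRestrict f)) (hx₁ : x₁ ∈ s) (hball : closedBall x₁ ρ ⊆ s)
    (himage : closedBall (f x₁) ρ ⊆ f '' s) :
    f '' closedBall x₁ ρ = closedBall (f x₁) ρ := by
  have hdist : ∀ x ∈ s, dist (f x) (f x₁) = dist x x₁ := fun x hx =>
    hf.dist_eq ⟨x, hx⟩ ⟨x₁, hx₁⟩
  ext y
  constructor
  · rintro ⟨x, hx, rfl⟩
    rw [mem_closedBall, hdist x (hball hx)]
    exact hx
  · intro hy
    obtain ⟨x, hx, rfl⟩ := himage hy
    exact ⟨x, by rwa [mem_closedBall, ← hdist x hx], rfl⟩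

theorem dist_add_le_of_closedBall_subset_image {X Y : Type*} [MetricSpace X]
    [NormedAddCommGroup Y] [NormedSpace ℝ Y] {f : X → Y} {x₀ x₁ : X} {r ρ : ℝ}
    (hf : Isometry ((closedBall x₀ r).domRestrict f))
    (hx₁ : x₁ ∈ closedBall x₀ r) (hρ₀ : 0 ≤ ρ) (hρr : ρ ≤ r)
    (hsub : closedBall (f x₁) ρ ⊆ f '' closedBall x₀ r) :
    dist x₁ x₀ + ρ ≤ r := by
  rcases eq_or_ne x₁ x₀ with rfl | hne
  · simpa using hρr
  have hx₀ : x₀ ∈ closedBall x₀ r := mem_closedBall_self (dist_nonneg.trans hx₁)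
  have hfx : dist (f x₁) (f x₀) = dist x₁ x₀ := hf.dist_eq ⟨x₁, hx₁⟩ ⟨x₀, hx₀⟩
  have hfne : f x₁ ≠ f x₀ := by
    rw [← dist_ne_zero, hfx]
    exact dist_ne_zero.2 hne
  obtain ⟨y, hy₁, hy₀⟩ := exists_dist_eq_and_dist_eq_dist_add hfne hρ₀
  obtain ⟨x, hx, rfl⟩ := hsub (mem_closedBall.2 hy₁.le)
  have hxx₀ : dist x x₀ = dist x₁ x₀ + ρ := by
    rw [← hfx, ← hy₀]
    exact (hf.dist_eq ⟨x, hx⟩ ⟨x₀, hx₀⟩).symm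
  exact hxx₀ ▸ mem_closedBall.1 hx

theorem isometry_image_interior_point_ball_general
    {X Y : Type*} [NormedAddCommGroup X]
    [NormedAddCommGroup Y] [NormedSpace ℝ Y]
    (x₀ : X) (r : ℝ) (hr : 0 < r) (f : X → Y)
    (hf : ∀ x₁ ∈ Metric.closedBall x₀ r, ∀ x₂ ∈ Metric.closedBall x₀ r,
      ‖f x₁ - f x₂‖ = ‖x₁ - x₂‖)
    (y₁ : Y) (hy₁ : y₁ ∈ interior (f '' Metric.closedBall x₀ r)) :
    ∃ x₁ ∈ Metric.closedBall x₀ r, f x₁ = y₁ ∧ ∃ r₁ > 0,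
      Metric.closedBall x₁ r₁ ⊆ Metric.closedBall x₀ r ∧
      f '' Metric.closedBall x₁ r₁ = Metric.closedBall y₁ r₁ := by
  have hiso : Isometry ((closedBall x₀ r).domRestrict f) :=
    Isometry.of_dist_eq fun a b => by
      simpa only [Set.domRestrict_apply, Subtype.dist_eq, dist_eq_norm] using hf a a.2 b b.2
  obtain ⟨ε, hε, hεsub⟩ := nhds_basis_closedBall.mem_iff.1 (mem_interior_iff_mem_nhds.1 hy₁)
  obtain ⟨x₁, hx₁, rfl⟩ := hεsub (mem_closedBall_self hε.le)
  have hr₁ : 0 < min ε r := lt_min hε hr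
  have hsub : closedBall (f x₁) (min ε r) ⊆ f '' closedBall x₀ r :=
    (closedBall_subset_closedBall (min_le_left ε r)).trans hεsub
  have hball : closedBall x₁ (min ε r) ⊆ closedBall x₀ r :=
    closedBall_subset_closedBall' <| by
      linarith [dist_add_le_of_closedBall_subset_image hiso hx₁ hr₁.le (min_le_right ε r) hsub]
  exact ⟨x₁, hx₁, rfl, min ε r, hr₁, hball,
    image_closedBall_eq_of_isometry_domRestrict hiso hx₁ hball hsub⟩

/-- If `y₁` is an interior point of the image of a ball under an isometry `f`,
then `f` maps a small ball around the (unique) preimage `x₁` of `y₁` exactly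
onto the ball of the same radius around `y₁`. -/
theorem isometry_image_interior_point_ball
    {X Y : Type*} [NormedAddCommGroup X] [NormedSpace ℝ X] [CompleteSpace X]
    [NormedAddCommGroup Y] [NormedSpace ℝ Y] [CompleteSpace Y]
    (x₀ : X) (r : ℝ) (hr : 0 < r) (f : X → Y)
    (hf : ∀ x₁ ∈ Metric.closedBall x₀ r, ∀ x₂ ∈ Metric.closedBall x₀ r,
      ‖f x₁ - f x₂‖ = ‖x₁ - x₂‖)
    (y₁ : Y) (hy₁ : y₁ ∈ interior (f '' Metric.closedBall x₀ r)) :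
    ∃ x₁ ∈ Metric.closedBall x₀ r, f x₁ = y₁ ∧ ∃ r₁ > 0,
      Metric.closedBall x₁ r₁ ⊆ Metric.closedBall x₀ r ∧
      f '' Metric.closedBall x₁ r₁ = Metric.closedBall y₁ r₁ :=
  isometry_image_interior_point_ball_general x₀ r hr f hf y₁ hy₁
end

section
/- Let X be a separable real Banach space and Y a real Banach space. Let U : X → Y be a surjective map such that for every x₀ ∈ X there exists ε(x₀) > 0 with U restricted to B(x₀, ε(x₀)) an isometry. Then there exists a point x_m ∈ X such that the image U(B(x_m, ε(x_m))) has nonempty interior in Y. -/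
/-- Baire category step: for a locally isometric surjection from a separable
Banach space, the image of some of the given balls has nonempty interior. -/
theorem exists_ball_image_nonempty_interior
    {X Y : Type*} [NormedAddCommGroup X] [NormedSpace ℝ X] [CompleteSpace X]
    [TopologicalSpace.SeparableSpace X]
    [NormedAddCommGroup Y] [NormedSpace ℝ Y] [CompleteSpace Y]
    (U : X → Y) (hU : Function.Surjective U)
    (ε : X → ℝ) (hε : ∀ x₀ : X, 0 < ε x₀)
    (hloc : ∀ x₀ : X, ∀ x₁ ∈ Metric.closedBall x₀ (ε x₀), ∀ x₂ ∈ Metric.closedBall x₀ (ε x₀),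
      ‖U x₁ - U x₂‖ = ‖x₁ - x₂‖) :
    ∃ xm : X, (interior (U '' Metric.closedBall xm (ε xm))).Nonempty := by
  -- countable subcover of X by the open balls
  obtain ⟨T, hTc, hTcov⟩ := TopologicalSpace.isOpen_iUnion_countable
    (fun x : X => Metric.ball x (ε x)) (fun x => Metric.isOpen_ball)
  have hcovX : (⋃ x ∈ T, Metric.ball x (ε x)) = Set.univ := by
    rw [hTcov]
    apply Set.eq_univ_of_forall
    intro x
    exact Set.mem_iUnion.2 ⟨x, Metric.mem_ball_self (hε x)⟩
  haveI : Countable T := hTc.to_subtype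
  -- each image is closed
  have hclosed : ∀ x₀ : X, IsClosed (U '' Metric.closedBall x₀ (ε x₀)) := by
    intro x₀
    set B := Metric.closedBall x₀ (ε x₀)
    haveI : CompleteSpace B :=
      Metric.isClosed_closedBall.isComplete.completeSpace_coe
    have hiso : Isometry (fun p : B => U p) := by
      intro p q
      rw [edist_dist, edist_dist, Subtype.dist_eq, dist_eq_norm, dist_eq_norm,
        hloc x₀ p p.2 q q.2]
    have hrange : Set.range (fun p : B => U p) = U '' B := by
      ext y
      simp [Set.mem_image]
    have := hiso.isUniformInducing.isComplete_range
    rw [hrange] at this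
    exact this.isClosed
  -- Baire
  have hcovY : (⋃ t : T, U '' Metric.closedBall (t : X) (ε t)) = Set.univ := by
    apply Set.eq_univ_of_forall
    intro y
    obtain ⟨x, rfl⟩ := hU y
    have hx : x ∈ ⋃ t ∈ T, Metric.ball t (ε t) := hcovX ▸ Set.mem_univ x
    obtain ⟨t, ht, hxt⟩ := Set.mem_iUnion₂.1 hx
    exact Set.mem_iUnion.2 ⟨⟨t, ht⟩, Set.mem_image_of_mem U (Metric.ball_subset_closedBall hxt)⟩
  obtain ⟨t, ht⟩ := nonempty_interior_of_iUnion_of_closed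
    (f := fun t : T => U '' Metric.closedBall (t : X) (ε t)) (fun t => hclosed t) hcovY
  exact ⟨t, ht⟩
end
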